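/- For fixed t > 0, the upper tail T̃_m(t) of the Student t-distribution with m degrees of freedom is non-increasing in the degrees of freedom m, i.e., for integers 1 ≤ m₁ < m₂ one has T̃_{m₂}(t) ≤ T̃_{m₁}(t). -/

import Mathlib

/-
The densities of `t_{m₁}` and `t_{m₂}` cross exactly once on `(0, ∞)`. Indeed
`log (t_{m₁}(s) / t_{m₂}(s)) = log (C_{m₁} / C_{m₂}) + L(s²)` with `C = tNorm` and
`L = tLogRatio m₁ m₂`; here `L(0) = 0`, `L` decreases on `[0, 1]`, increases on `[1, ∞)` and
tends to `∞`, and the normalising constants satisfy `C_{m₁} ≤ C_{m₂}`. So `t_{m₁} ≤ t_{m₂}` up to the crossing point and `t_{m₁} ≥ t_{m₂}` beyond it;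
as both densities give mass `1/2` to `(0, ∞)`, the tail of `t_{m₁}` dominates.

`C_ν ≤ C_{ν+1}` amounts to `Γ(x + 1/2)⁴ (x + 1/2) ≤ x³ Γ(x)⁴` for `x = ν/2`: the quotient of the
two sides does not decrease under `x ↦ x + 1`, and log-convexity of `Γ` bounds it by
`1 + 1/(2x)`. The normalisation `∫ t_m = 1` comes from the integration-by-parts recursion
`∫ (1 + u²)^(-(a+1)) = (2a - 1)/(2a) ∫ (1 + u²)^(-a)`.
-/

open MeasureTheory

/-- Density of Student's t-distribution with `m` degrees of freedom. -/
noncomputable def tPDF (m : ℕ) (t : ℝ) : ℝ :=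
  Real.Gamma (((m : ℝ) + 1) / 2) / (Real.sqrt (Real.pi * m) * Real.Gamma ((m : ℝ) / 2)) *
    (1 + t ^ 2 / m) ^ (-(((m : ℝ) + 1) / 2))

/-- Upper tail function of Student's t-distribution with `m` degrees of freedom. -/
noncomputable def tTail (m : ℕ) (t : ℝ) : ℝ := ∫ s in Set.Ioi t, tPDF m s

open Real Set Filter Topology

theorem Gamma_add_half_sq_le {x : ℝ} (hx : 0 < x) : Gamma (x + 1 / 2) ^ 2 ≤ x * Gamma x ^ 2 := by
  have h := Gamma_mul_add_mul_le_rpow_Gamma_mul_rpow_Gamma hx (by linarith : 0 < x + 1)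
    (by norm_num : (0 : ℝ) < 1 / 2) (by norm_num : (0 : ℝ) < 1 / 2) (by norm_num)
  have hΓ := Gamma_pos_of_pos hx
  rw [show 1 / 2 * x + 1 / 2 * (x + 1) = x + 1 / 2 by ring, Gamma_add_one hx.ne'] at h
  calc Gamma (x + 1 / 2) ^ 2 ≤ (Gamma x ^ (1 / 2 : ℝ) * (x * Gamma x) ^ (1 / 2 : ℝ)) ^ 2 := by
        gcongr
    _ = x * Gamma x ^ 2 := by
        rw [← mul_rpow hΓ.le (by positivity), ← rpow_natCast, ← rpow_mul (by positivity),
          show (1 / 2 : ℝ) * ((2 : ℕ) : ℝ) = 1 by norm_num, rpow_one]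
        ring

noncomputable def gammaHalfDefect (x : ℝ) : ℝ :=
  Gamma (x + 1 / 2) ^ 4 * (x + 1 / 2) / (x ^ 3 * Gamma x ^ 4)

theorem gammaHalfDefect_le_add_one {x : ℝ} (hx : 0 < x) :
    gammaHalfDefect x ≤ gammaHalfDefect (x + 1) := by
  have hΓ := Gamma_pos_of_pos hx
  have hΓ' := Gamma_pos_of_pos (by linarith : 0 < x + 1 / 2)
  unfold gammaHalfDefect
  rw [add_right_comm, Gamma_add_one hx.ne', Gamma_add_one (by linarith : x + 1 / 2 ≠ 0),
    div_le_div_iff₀ (by positivity) (by positivity)]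
  have key : x * (x + 1) ^ 3 ≤ (x + 1 / 2) ^ 3 * (x + 1 / 2 + 1) := by nlinarith
  have := mul_le_mul_of_nonneg_left key
    (by positivity : 0 ≤ Gamma (x + 1 / 2) ^ 4 * x ^ 3 * Gamma x ^ 4 * (x + 1 / 2))
  nlinarith [this]

theorem gammaHalfDefect_le {x : ℝ} (hx : 0 < x) : gammaHalfDefect x ≤ 1 + 1 / (2 * x) := by
  have hΓ := Gamma_pos_of_pos hx
  have h := Gamma_add_half_sq_le hx
  unfold gammaHalfDefect
  rw [div_le_iff₀ (by positivity)]
  calc Gamma (x + 1 / 2) ^ 4 * (x + 1 / 2) = (Gamma (x + 1 / 2) ^ 2) ^ 2 * (x + 1 / 2) := by ring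
    _ ≤ (x * Gamma x ^ 2) ^ 2 * (x + 1 / 2) := by gcongr
    _ = (1 + 1 / (2 * x)) * (x ^ 3 * Gamma x ^ 4) := by field_simp

theorem gammaHalfDefect_le_one {x : ℝ} (hx : 0 < x) : gammaHalfDefect x ≤ 1 := by
  have hchain : ∀ n : ℕ, gammaHalfDefect x ≤ 1 + 1 / (2 * (x + n)) := fun n => by
    refine le_trans ?_ (gammaHalfDefect_le (by positivity))
    induction n with
    | zero => simp
    | succ n ih =>
      push_cast
      rw [← add_assoc]
      exact ih.trans (gammaHalfDefect_le_add_one (by positivity))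
  have hlim : Tendsto (fun n : ℕ => 1 + 1 / (2 * (x + n))) atTop (𝓝 1) := by
    have : Tendsto (fun n : ℕ => 2 * (x + n)) atTop atTop :=
      (tendsto_atTop_add_const_left _ x tendsto_natCast_atTop_atTop).const_mul_atTop two_pos
    simpa using (this.inv_tendsto_atTop).const_add 1
  exact ge_of_tendsto' hlim hchain

noncomputable def tNorm (ν : ℝ) : ℝ :=
  Gamma ((ν + 1) / 2) / (√(π * ν) * Gamma (ν / 2))

theorem tNorm_pos {ν : ℝ} (hν : 0 < ν) : 0 < tNorm ν := by
  unfold tNorm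
  have := Gamma_pos_of_pos (by linarith : 0 < (ν + 1) / 2)
  have := Gamma_pos_of_pos (by linarith : 0 < ν / 2)
  positivity

theorem tNorm_le_add_one {ν : ℝ} (hν : 0 < ν) : tNorm ν ≤ tNorm (ν + 1) := by
  obtain ⟨x, rfl⟩ : ∃ x, ν = 2 * x := ⟨ν / 2, by ring⟩
  have hx : 0 < x := by linarith
  have hΓ := Gamma_pos_of_pos hx
  have hΓ' := Gamma_pos_of_pos (by linarith : 0 < x + 1 / 2)
  have key := gammaHalfDefect_le_one hx
  rw [gammaHalfDefect, div_le_one (by positivity)] at key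
  refine (pow_le_pow_iff_left₀ (tNorm_pos hν).le (tNorm_pos (by linarith)).le two_ne_zero).1 ?_
  rw [tNorm, tNorm, show (2 * x + 1) / 2 = x + 1 / 2 by ring,
    show (2 * x + 1 + 1) / 2 = x + 1 by ring, show 2 * x / 2 = x by ring, Gamma_add_one hx.ne']
  simp only [div_pow, mul_pow, sq_sqrt (by positivity : 0 ≤ π * (2 * x)),
    sq_sqrt (by positivity : 0 ≤ π * (2 * x + 1))]
  rw [div_le_div_iff₀ (by positivity) (by positivity)]
  nlinarith [pi_pos]

theorem tNorm_mono {m₁ m₂ : ℕ} (hm₁ : 1 ≤ m₁) (h : m₁ ≤ m₂) : tNorm m₁ ≤ tNorm m₂ := by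
  induction m₂, h using Nat.le_induction with
  | base => exact le_rfl
  | succ n hn ih =>
    push_cast
    exact ih.trans (tNorm_le_add_one (by exact_mod_cast hm₁.trans hn))

theorem integrable_one_add_sq_rpow_neg {a : ℝ} (ha : 1 / 2 < a) :
    Integrable fun u : ℝ => (1 + u ^ 2) ^ (-a) := by
  have h := integrable_rpow_neg_one_add_norm_sq (E := ℝ) (μ := volume) (r := 2 * a)
    (by rw [Module.finrank_self, Nat.cast_one]; linarith)
  simpa [Real.norm_eq_abs, sq_abs, neg_div] using h

theorem hasDerivAt_mul_one_add_sq_rpow_neg (a u : ℝ) :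
    HasDerivAt (fun u : ℝ => u * (1 + u ^ 2) ^ (-a))
      ((1 - 2 * a) * (1 + u ^ 2) ^ (-a) + 2 * a * (1 + u ^ 2) ^ (-(a + 1))) u := by
  have hpos : 0 < 1 + u ^ 2 := by positivity
  have hb : HasDerivAt (fun u : ℝ => 1 + u ^ 2) (2 * u) u := by
    simpa using (hasDerivAt_pow 2 u).const_add 1
  refine ((hasDerivAt_id u).mul (hb.rpow_const (p := -a) (Or.inl hpos.ne'))).congr_deriv ?_
  have hsplit : (1 + u ^ 2) ^ (-a) = (1 + u ^ 2) ^ (-a - 1) * (1 + u ^ 2) := by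
    rw [← rpow_add_one hpos.ne']; ring_nf
  rw [hsplit, show -(a + 1) = -a - 1 by ring]
  simp only [id]
  ring

theorem tendsto_mul_one_add_sq_rpow_neg_atTop {a : ℝ} (ha : 1 / 2 < a) :
    Tendsto (fun u : ℝ => u * (1 + u ^ 2) ^ (-a)) atTop (𝓝 0) := by
  have hlim : Tendsto (fun u : ℝ => (1 + u ^ 2) ^ (-(a - 1 / 2))) atTop (𝓝 0) :=
    (tendsto_rpow_neg_atTop (by linarith)).comp
      (tendsto_atTop_add_const_left _ 1 (tendsto_pow_atTop two_ne_zero))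
  refine tendsto_of_tendsto_of_tendsto_of_le_of_le' tendsto_const_nhds hlim ?_ ?_
  · filter_upwards [eventually_ge_atTop 0] with u hu
    positivity
  · filter_upwards [eventually_ge_atTop 0] with u hu
    have hpos : 0 < 1 + u ^ 2 := by positivity
    have hu : u ≤ (1 + u ^ 2) ^ (1 / 2 : ℝ) := by
      rw [← sqrt_eq_rpow]; exact le_sqrt_of_sq_le (by linarith)
    calc u * (1 + u ^ 2) ^ (-a) ≤ (1 + u ^ 2) ^ (1 / 2 : ℝ) * (1 + u ^ 2) ^ (-a) := by gcongr
      _ = (1 + u ^ 2) ^ (-(a - 1 / 2)) := by rw [← rpow_add hpos]; ring_nf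

theorem tendsto_mul_one_add_sq_rpow_neg_half_atTop :
    Tendsto (fun u : ℝ => u * (1 + u ^ 2) ^ (-(1 / 2) : ℝ)) atTop (𝓝 1) := by
  have hcont : Tendsto (fun v : ℝ => (1 + v ^ 2) ^ (-(1 / 2) : ℝ)) (𝓝 0) (𝓝 1) := by
    have : Continuous (fun v : ℝ => (1 + v ^ 2) ^ (-(1 / 2) : ℝ)) :=
      (by fun_prop : Continuous fun v : ℝ => 1 + v ^ 2).rpow_const fun v => Or.inl (by positivity)
    simpa using this.tendsto 0
  refine (hcont.comp tendsto_inv_atTop_zero).congr' ?_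
  filter_upwards [eventually_gt_atTop 0] with u hu
  have hpos : 0 < 1 + u ^ 2 := by positivity
  have hsqrt : √(1 + u⁻¹ ^ 2) = √(1 + u ^ 2) / u := by
    rw [show 1 + u⁻¹ ^ 2 = (1 + u ^ 2) / u ^ 2 by field_simp; ring, sqrt_div' _ (by positivity),
      sqrt_sq hu.le]
  rw [Function.comp_apply, rpow_neg (by positivity), rpow_neg hpos.le, ← sqrt_eq_rpow,
    ← sqrt_eq_rpow, hsqrt]
  field_simp

theorem tendsto_atBot_of_odd {f : ℝ → ℝ} (hf : f.Odd) {c : ℝ}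
    (h : Tendsto f atTop (𝓝 c)) : Tendsto f atBot (𝓝 (-c)) := by
  refine (h.comp tendsto_neg_atBot_atTop).neg.congr fun u => ?_
  rw [Function.comp_apply, hf u, neg_neg]

theorem odd_mul_one_add_sq_rpow_neg (a : ℝ) : (fun u : ℝ => u * (1 + u ^ 2) ^ (-a)).Odd :=
  fun u => by simp only [neg_sq, neg_mul]

theorem integral_one_add_sq_rpow_neg_add_one {a : ℝ} (ha : 1 / 2 < a) :
    ∫ u : ℝ, (1 + u ^ 2) ^ (-(a + 1)) = (2 * a - 1) / (2 * a) * ∫ u : ℝ, (1 + u ^ 2) ^ (-a) := by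
  have hi := integrable_one_add_sq_rpow_neg ha
  have hi' := integrable_one_add_sq_rpow_neg (a := a + 1) (by linarith)
  have htop := tendsto_mul_one_add_sq_rpow_neg_atTop ha
  have h := integral_of_hasDerivAt_of_tendsto (hasDerivAt_mul_one_add_sq_rpow_neg a)
    ((hi.const_mul _).add (hi'.const_mul _))
    (tendsto_atBot_of_odd (odd_mul_one_add_sq_rpow_neg a) htop) htop
  rw [integral_add (hi.const_mul _) (hi'.const_mul _), integral_const_mul, integral_const_mul]
    at h
  rw [div_mul_eq_mul_div, eq_div_iff (by linarith)]
  linarith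

theorem integral_one_add_sq_rpow_neg_three_halves :
    ∫ u : ℝ, (1 + u ^ 2) ^ (-(3 / 2) : ℝ) = 2 := by
  have htop := tendsto_mul_one_add_sq_rpow_neg_half_atTop
  have h := integral_of_hasDerivAt_of_tendsto (hasDerivAt_mul_one_add_sq_rpow_neg (1 / 2))
    ?_ (tendsto_atBot_of_odd (odd_mul_one_add_sq_rpow_neg (1 / 2)) htop) htop
  · norm_num at h ⊢
    linarith
  · norm_num
    exact integrable_one_add_sq_rpow_neg (by norm_num)

theorem integral_one_add_sq_rpow_neg_half_nat (n : ℕ) :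
    ∫ u : ℝ, (1 + u ^ 2) ^ (-(((n : ℝ) + 2) / 2)) =
      √π * Gamma (((n : ℝ) + 1) / 2) / Gamma (((n : ℝ) + 2) / 2) := by
  induction n using Nat.twoStepInduction with
  | zero =>
    norm_num [rpow_neg_one, integral_univ_inv_one_add_sq, Gamma_one_half_eq,
      mul_self_sqrt pi_pos.le]
  | one =>
    norm_num [integral_one_add_sq_rpow_neg_three_halves]
    rw [show (3 / 2 : ℝ) = 1 / 2 + 1 by norm_num, Gamma_add_one (by norm_num), Gamma_one_half_eq]
    field_simp
  | more n ih _ =>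
    have ha : 1 / 2 < ((n : ℝ) + 2) / 2 := by have := n.cast_nonneg (α := ℝ); linarith
    have hΓ := Gamma_pos_of_pos (by linarith : 0 < ((n : ℝ) + 2) / 2)
    push_cast
    rw [show ((n : ℝ) + 2 + 2) / 2 = ((n : ℝ) + 2) / 2 + 1 by ring,
      show ((n : ℝ) + 2 + 1) / 2 = ((n : ℝ) + 1) / 2 + 1 by ring,
      integral_one_add_sq_rpow_neg_add_one ha, ih, Gamma_add_one (by positivity),
      Gamma_add_one (by positivity)]
    field_simp
    ring

noncomputable def tKernel (ν s : ℝ) : ℝ := (1 + s ^ 2 / ν) ^ (-((ν + 1) / 2))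

theorem tPDF_eq_tNorm_mul_tKernel (m : ℕ) (s : ℝ) : tPDF m s = tNorm m * tKernel m s := rfl

theorem tKernel_eq_div_sqrt {ν : ℝ} (hν : 0 < ν) (s : ℝ) :
    tKernel ν s = (1 + (s / √ν) ^ 2) ^ (-((ν + 1) / 2)) := by
  rw [tKernel, div_pow, sq_sqrt hν.le]

theorem integrable_tKernel {ν : ℝ} (hν : 0 < ν) : Integrable (tKernel ν) := by
  simp_rw [funext (tKernel_eq_div_sqrt hν)]
  exact (integrable_one_add_sq_rpow_neg (by linarith)).comp_div (by positivity)

theorem integral_tKernel {ν : ℝ} (hν : 0 < ν) :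
    ∫ s, tKernel ν s = √ν * ∫ u : ℝ, (1 + u ^ 2) ^ (-((ν + 1) / 2)) := by
  simp_rw [tKernel_eq_div_sqrt hν]
  rw [Measure.integral_comp_div (fun u : ℝ => (1 + u ^ 2) ^ (-((ν + 1) / 2))),
    abs_of_pos (by positivity), smul_eq_mul]

theorem integrable_tPDF {m : ℕ} (hm : 1 ≤ m) : Integrable (tPDF m) :=
  (integrable_tKernel (by exact_mod_cast hm)).const_mul (tNorm m)

theorem integral_tPDF {m : ℕ} (hm : 1 ≤ m) : ∫ s, tPDF m s = 1 := by
  obtain ⟨n, rfl⟩ : ∃ n, m = n + 1 := ⟨m - 1, by omega⟩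
  have hJ := integral_one_add_sq_rpow_neg_half_nat n
  have hΓ := Gamma_pos_of_pos (by positivity : 0 < ((n : ℝ) + 1) / 2)
  have hΓ' := Gamma_pos_of_pos (by positivity : 0 < ((n : ℝ) + 1 + 1) / 2)
  simp_rw [tPDF_eq_tNorm_mul_tKernel]
  rw [integral_const_mul, integral_tKernel (by positivity), tNorm]
  push_cast
  rw [show ((n : ℝ) + 1 + 1) / 2 = ((n : ℝ) + 2) / 2 by ring, hJ, sqrt_mul pi_pos.le]
  field_simp

theorem tPDF_neg (m : ℕ) (s : ℝ) : tPDF m (-s) = tPDF m s := by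
  rw [tPDF, tPDF, neg_sq]

theorem tPDF_pos {m : ℕ} (hm : 1 ≤ m) (s : ℝ) : 0 < tPDF m s :=
  mul_pos (tNorm_pos (by exact_mod_cast hm)) (rpow_pos_of_pos (by positivity) _)

theorem integral_Ioi_zero_tPDF {m : ℕ} (hm : 1 ≤ m) : ∫ s in Ioi 0, tPDF m s = 1 / 2 := by
  have hint := integrable_tPDF hm
  have hsymm : ∫ s in Iic 0, tPDF m s = ∫ s in Ioi 0, tPDF m s := by
    simpa [tPDF_neg] using (integral_comp_neg_Ioi 0 (tPDF m)).symm
  have h := intervalIntegral.integral_Iic_add_Ioi (b := 0) hint.integrableOn hint.integrableOn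
  rw [integral_tPDF hm, hsymm] at h
  linarith

noncomputable def tLogRatio (ν₁ ν₂ u : ℝ) : ℝ :=
  (ν₂ + 1) / 2 * log (1 + u / ν₂) - (ν₁ + 1) / 2 * log (1 + u / ν₁)

theorem tLogRatio_zero (ν₁ ν₂ : ℝ) : tLogRatio ν₁ ν₂ 0 = 0 := by
  simp [tLogRatio]

section tLogRatio

variable {ν₁ ν₂ : ℝ} (hν₁ : 0 < ν₁) (hν₂ : 0 < ν₂)
include hν₁ hν₂

theorem hasDerivAt_tLogRatio {u : ℝ} (hu : 0 ≤ u) :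
    HasDerivAt (tLogRatio ν₁ ν₂) ((ν₂ - ν₁) * (u - 1) / (2 * ((ν₁ + u) * (ν₂ + u)))) u := by
  have hlog : ∀ ν : ℝ, 0 < ν →
      HasDerivAt (fun u => (ν + 1) / 2 * log (1 + u / ν)) ((ν + 1) / (2 * (ν + u))) u := by
    intro ν hν
    refine ((((hasDerivAt_id u).div_const ν).const_add 1).log
      (by positivity)).const_mul ((ν + 1) / 2) |>.congr_deriv ?_
    simp only [id]
    field_simp
  refine ((hlog ν₂ hν₂).sub (hlog ν₁ hν₁)).congr_deriv ?_
  field_simp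
  ring

theorem continuousOn_tLogRatio : ContinuousOn (tLogRatio ν₁ ν₂) (Ici 0) := fun _ hu =>
  (hasDerivAt_tLogRatio hν₁ hν₂ hu).continuousAt.continuousWithinAt

variable (h : ν₁ ≤ ν₂)
include h

theorem tLogRatio_antitoneOn : AntitoneOn (tLogRatio ν₁ ν₂) (Icc 0 1) := by
  refine antitoneOn_of_hasDerivWithinAt_nonpos (convex_Icc 0 1)
    ((continuousOn_tLogRatio hν₁ hν₂).mono Icc_subset_Ici_self)
    (fun u hu => (hasDerivAt_tLogRatio hν₁ hν₂ (interior_subset hu).1).hasDerivWithinAt) ?_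
  intro u hu
  rw [interior_Icc] at hu
  exact div_nonpos_of_nonpos_of_nonneg
    (mul_nonpos_of_nonneg_of_nonpos (by linarith) (by linarith [hu.2])) (by nlinarith [hu.1])

theorem tLogRatio_monotoneOn : MonotoneOn (tLogRatio ν₁ ν₂) (Ici 1) := by
  refine monotoneOn_of_hasDerivWithinAt_nonneg (convex_Ici 1)
    ((continuousOn_tLogRatio hν₁ hν₂).mono (Ici_subset_Ici.2 zero_le_one))
    (fun u hu => (hasDerivAt_tLogRatio hν₁ hν₂
      (zero_le_one.trans (interior_subset hu : u ∈ Ici 1))).hasDerivWithinAt) ?_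
  intro u hu
  rw [interior_Ici] at hu
  have hu : 1 < u := hu
  exact div_nonneg (mul_nonneg (by linarith) (by linarith)) (by nlinarith)

end tLogRatio

theorem tendsto_tLogRatio_atTop {ν₁ ν₂ : ℝ} (hν₁ : 0 < ν₁) (h : ν₁ < ν₂) :
    Tendsto (tLogRatio ν₁ ν₂) atTop atTop := by
  have hν₂ : 0 < ν₂ := hν₁.trans h
  have hlog : Tendsto (fun u => log (1 + u / ν₂)) atTop atTop :=
    tendsto_log_atTop.comp (tendsto_atTop_add_const_left _ 1 (tendsto_id.atTop_div_const hν₂))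
  refine tendsto_atTop_mono' _ ?_ (tendsto_atTop_add_const_right _ ((ν₁ + 1) / 2 * log (ν₁ / ν₂))
    (hlog.const_mul_atTop (by linarith : 0 < (ν₂ - ν₁) / 2)))
  filter_upwards [eventually_ge_atTop 0] with u hu
  have hdiff : log (ν₁ / ν₂) ≤ log (1 + u / ν₂) - log (1 + u / ν₁) := by
    rw [← log_div (by positivity) (by positivity)]
    refine log_le_log (by positivity) ?_
    rw [div_le_div_iff₀ hν₂ (by positivity)]
    field_simp
    nlinarith
  have := mul_le_mul_of_nonneg_left hdiff (by linarith : 0 ≤ (ν₁ + 1) / 2)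
  unfold tLogRatio
  nlinarith

theorem exists_crossing_of_antitoneOn_of_monotoneOn {L : ℝ → ℝ} {b δ : ℝ} (hb : 0 ≤ b)
    (hL : ContinuousOn L (Ici 0)) (hanti : AntitoneOn L (Icc 0 b)) (hmono : MonotoneOn L (Ici b))
    (htop : Tendsto L atTop atTop) (hδ : L 0 ≤ δ) :
    ∃ c, 0 ≤ c ∧ (∀ u ∈ Icc 0 c, L u ≤ δ) ∧ ∀ u, c ≤ u → δ ≤ L u := by
  have hLb : L b ≤ δ := (hanti ⟨le_rfl, hb⟩ ⟨hb, le_rfl⟩ hb).trans hδ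
  obtain ⟨u₁, hu₁b, hu₁⟩ := ((eventually_ge_atTop b).and (htop.eventually_ge_atTop δ)).exists
  obtain ⟨c, hc, hLc⟩ := intermediate_value_Icc hu₁b
    (hL.mono fun u hu => hb.trans hu.1) ⟨hLb, hu₁⟩
  refine ⟨c, hb.trans hc.1, fun u hu => ?_, fun u hu => hLc ▸ hmono hc.1 (hc.1.trans hu) hu⟩
  rcases le_total u b with hub | hbu
  · exact (hanti ⟨le_rfl, hb⟩ ⟨hu.1, hub⟩ hu.1).trans hδ
  · exact hLc ▸ hmono hbu hc.1 hu.2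

theorem tKernel_eq_exp_mul {ν₁ ν₂ : ℝ} (hν₁ : 0 < ν₁) (hν₂ : 0 < ν₂) (s : ℝ) :
    tKernel ν₁ s = exp (tLogRatio ν₁ ν₂ (s ^ 2)) * tKernel ν₂ s := by
  rw [tKernel, tKernel, rpow_def_of_pos (by positivity), rpow_def_of_pos (by positivity),
    ← exp_add, tLogRatio]
  ring_nf

section tPDF

variable {m₁ m₂ : ℕ} (hm₁ : 1 ≤ m₁) (hm₂ : 1 ≤ m₂) (s : ℝ)
include hm₁ hm₂

theorem tPDF_eq_mul_exp :
    tPDF m₁ s = tPDF m₂ s * exp (tLogRatio m₁ m₂ (s ^ 2) - log (tNorm m₂ / tNorm m₁)) := by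
  have hν₁ : (0 : ℝ) < m₁ := by exact_mod_cast hm₁
  have hν₂ : (0 : ℝ) < m₂ := by exact_mod_cast hm₂
  have hN₁ := tNorm_pos hν₁
  have hN₂ := tNorm_pos hν₂
  rw [tPDF_eq_tNorm_mul_tKernel, tPDF_eq_tNorm_mul_tKernel, tKernel_eq_exp_mul hν₁ hν₂, exp_sub,
    exp_log (by positivity)]
  field_simp

theorem tPDF_le_tPDF_iff_tLogRatio_le :
    tPDF m₁ s ≤ tPDF m₂ s ↔ tLogRatio m₁ m₂ (s ^ 2) ≤ log (tNorm m₂ / tNorm m₁) := by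
  rw [tPDF_eq_mul_exp hm₁ hm₂, mul_le_iff_le_one_right (tPDF_pos hm₂ s), exp_le_one_iff,
    sub_nonpos]

theorem tPDF_le_tPDF_iff_le_tLogRatio :
    tPDF m₂ s ≤ tPDF m₁ s ↔ log (tNorm m₂ / tNorm m₁) ≤ tLogRatio m₁ m₂ (s ^ 2) := by
  rw [tPDF_eq_mul_exp hm₁ hm₂, le_mul_iff_one_le_right (tPDF_pos hm₂ s), one_le_exp_iff,
    sub_nonneg]

end tPDF

theorem setIntegral_Ioi_le_of_crossing {μ : Measure ℝ} {f g : ℝ → ℝ} {a c t : ℝ}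
    (hf : IntegrableOn f (Ioi a) μ) (hg : IntegrableOn g (Ioi a) μ)
    (hfg : ∫ x in Ioi a, f x ∂μ = ∫ x in Ioi a, g x ∂μ)
    (hle : ∀ x ∈ Ioc a c, f x ≤ g x) (hge : ∀ x, c < x → g x ≤ f x) (ht : a ≤ t) :
    ∫ x in Ioi t, g x ∂μ ≤ ∫ x in Ioi t, f x ∂μ := by
  rcases le_total c t with hct | htc
  · exact setIntegral_mono_on (hg.mono_set (Ioi_subset_Ioi ht)) (hf.mono_set (Ioi_subset_Ioi ht))
      measurableSet_Ioi fun x hx => hge x (hct.trans_lt hx)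
  · have hsplit : ∀ h : ℝ → ℝ, IntegrableOn h (Ioi a) μ →
        ∫ x in Ioi a, h x ∂μ = ∫ x in Ioc a t, h x ∂μ + ∫ x in Ioi t, h x ∂μ := fun h hh => by
      rw [← setIntegral_union (Ioc_disjoint_Ioi le_rfl) measurableSet_Ioi
        (hh.mono_set Ioc_subset_Ioi_self) (hh.mono_set (Ioi_subset_Ioi ht)),
        Ioc_union_Ioi_eq_Ioi ht]
    have hhead : ∫ x in Ioc a t, f x ∂μ ≤ ∫ x in Ioc a t, g x ∂μ :=
      setIntegral_mono_on (hf.mono_set Ioc_subset_Ioi_self) (hg.mono_set Ioc_subset_Ioi_self)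
        measurableSet_Ioc fun x hx => hle x ⟨hx.1, hx.2.trans htc⟩
    linarith [hsplit f hf, hsplit g hg]

/-- For fixed `t > 0`, the upper tail of Student's t-distribution is non-increasing in the
degrees of freedom. -/
theorem stmt_4 (m₁ m₂ : ℕ) (hm₁ : 1 ≤ m₁) (hm : m₁ < m₂) (t : ℝ) (ht : 0 < t) :
    tTail m₂ t ≤ tTail m₁ t := by
  have hm₂ : 1 ≤ m₂ := by omega
  have hν₁ : (0 : ℝ) < m₁ := by exact_mod_cast hm₁
  have hν : (m₁ : ℝ) < m₂ := by exact_mod_cast hm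
  have hν₂ : (0 : ℝ) < m₂ := hν₁.trans hν
  have hnorm : tLogRatio m₁ m₂ 0 ≤ log (tNorm m₂ / tNorm m₁) := by
    rw [tLogRatio_zero]
    exact log_nonneg ((one_le_div (tNorm_pos hν₁)).2 (tNorm_mono hm₁ hm.le))
  obtain ⟨c, hc, hbelow, habove⟩ := exists_crossing_of_antitoneOn_of_monotoneOn zero_le_one
    (continuousOn_tLogRatio hν₁ hν₂) (tLogRatio_antitoneOn hν₁ hν₂ hν.le)
    (tLogRatio_monotoneOn hν₁ hν₂ hν.le) (tendsto_tLogRatio_atTop hν₁ hν) hnorm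
  refine setIntegral_Ioi_le_of_crossing (c := √c) (integrable_tPDF hm₁).integrableOn
    (integrable_tPDF hm₂).integrableOn
    (by rw [integral_Ioi_zero_tPDF hm₁, integral_Ioi_zero_tPDF hm₂]) (fun s hs => ?_)
    (fun s hs => ?_) ht.le
  · rw [tPDF_le_tPDF_iff_tLogRatio_le hm₁ hm₂]
    exact hbelow _ ⟨sq_nonneg s, (le_sqrt hs.1.le hc).1 hs.2⟩
  · rw [tPDF_le_tPDF_iff_le_tLogRatio hm₁ hm₂]
    exact habove _ (lt_sq_of_sqrt_lt hs).le
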